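/- arXiv:1603.03125 — 3 statements merged into one kernel-verified Lean document; each statement's English description precedes it below -/
import Mathlib

section
/- In the fusion ring with basis {1, X, Y, Z} and multiplication X·X = 1 + X, X·Y = Z, X·Z = Y + Z, Y·Y = 1, Y·Z = X, Z·Z = 1 + X (all basis elements self-dual), the formal codegrees, i.e., the eigenvalues of the matrix N = Σ_i N_i N_i^T where N_i are the left-multiplication matrices, are 5 + sqrt 5, 5 + sqrt 5, 5 - sqrt 5, 5 - sqrt 5. -/
open Polynomial

noncomputable def N0 : Matrix (Fin 4) (Fin 4) ℝ := 1
noncomputable def N1 : Matrix (Fin 4) (Fin 4) ℝ :=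
  !![0,1,0,0; 1,1,0,0; 0,0,0,1; 0,0,1,1]
noncomputable def N2 : Matrix (Fin 4) (Fin 4) ℝ :=
  !![0,0,1,0; 0,0,0,1; 1,0,0,0; 0,1,0,0]
noncomputable def N3 : Matrix (Fin 4) (Fin 4) ℝ :=
  !![0,0,0,1; 0,0,1,1; 0,1,0,0; 1,1,0,0]

set_option maxHeartbeats 1600000 in
theorem stmt13 :
    (N0 * N0.transpose + N1 * N1.transpose + N2 * N2.transpose
        + N3 * N3.transpose).charpoly =
      (X - C (5 + Real.sqrt 5)) ^ 2 * (X - C (5 - Real.sqrt 5)) ^ 2 := by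
  have hone : (1 : Matrix (Fin 4) (Fin 4) ℝ) = !![1,0,0,0; 0,1,0,0; 0,0,1,0; 0,0,0,1] := by
    ext i j
    fin_cases i <;> fin_cases j <;> simp [Matrix.one_apply, Matrix.vecHead, Matrix.vecTail]
  have t0 : N0.transpose = N0 := by rw [N0, Matrix.transpose_one]
  have t1 : N1.transpose = N1 := by
    ext i j; fin_cases i <;> fin_cases j <;> simp [N1, Matrix.transpose_apply, Matrix.vecHead, Matrix.vecTail]
  have t2 : N2.transpose = N2 := by
    ext i j; fin_cases i <;> fin_cases j <;> simp [N2, Matrix.transpose_apply, Matrix.vecHead, Matrix.vecTail]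
  have t3 : N3.transpose = N3 := by
    ext i j; fin_cases i <;> fin_cases j <;> simp [N3, Matrix.transpose_apply, Matrix.vecHead, Matrix.vecTail]
  have hM : N0 * N0.transpose + N1 * N1.transpose + N2 * N2.transpose
        + N3 * N3.transpose = !![4,2,0,0; 2,6,0,0; 0,0,4,2; 0,0,2,6] := by
    rw [t0, t1, t2, t3, N0, N1, N2, N3, one_mul, hone]
    ext i j
    fin_cases i <;> fin_cases j <;>
      norm_num [Matrix.mul_apply, Fin.sum_univ_four, Matrix.vecHead, Matrix.vecTail] <;> simp <;> norm_num
  rw [hM]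
  have hs : Real.sqrt 5 * Real.sqrt 5 = 5 := Real.mul_self_sqrt (by norm_num)
  have h1 : ((5:ℝ) + Real.sqrt 5) * ((5:ℝ) - Real.sqrt 5) = 20 := by nlinarith
  have h2 : ((5:ℝ) + Real.sqrt 5) + ((5:ℝ) - Real.sqrt 5) = 10 := by ring
  have hRHS : (X - C (5 + Real.sqrt 5)) ^ 2 * (X - C (5 - Real.sqrt 5)) ^ 2
      = (X^2 - C 10 * X + C 20 : ℝ[X])^2 := by
    rw [← mul_pow]
    congr 1
    rw [← h1, ← h2]
    push_cast [map_add, map_mul]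
    ring
  have hc : (!![4,2,0,0; 2,6,0,0; 0,0,4,2; 0,0,2,6] : Matrix (Fin 4) (Fin 4) ℝ).charmatrix
      = !![X - 4, -2, 0, 0; -2, X - 6, 0, 0; 0, 0, X - 4, -2; 0, 0, -2, X - 6] := by
    ext i j
    fin_cases i <;> fin_cases j <;>
      simp [Matrix.charmatrix_apply, Matrix.one_apply, map_ofNat, Matrix.vecHead, Matrix.vecTail]
  rw [hRHS, Matrix.charpoly, hc]
  simp [Matrix.det_succ_row_zero, Fin.sum_univ_succ, Matrix.det_fin_three, map_ofNat]
  norm_num [Fin.succAbove, Fin.lt_def]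
  simp
  ring
end

section
/- In the fusion ring with basis {1, X, Y, Z} and multiplication X·X = 1, X·Y = Y, X·Z = Z, Y·Y = 1 + X + Y, Y·Z = 2Z, Z·Z = 1 + X + 2Y (all basis elements self-dual), the eigenvalues of the matrix N = Σ_i N_i N_i^T are 12, 12, 3, and 2. -/
open Polynomial

noncomputable def M0 : Matrix (Fin 4) (Fin 4) ℝ := 1
noncomputable def M1 : Matrix (Fin 4) (Fin 4) ℝ :=
  !![0,1,0,0; 1,0,0,0; 0,0,1,0; 0,0,0,1]
noncomputable def M2 : Matrix (Fin 4) (Fin 4) ℝ :=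
  !![0,0,1,0; 0,0,1,0; 1,1,1,0; 0,0,0,2]
noncomputable def M3 : Matrix (Fin 4) (Fin 4) ℝ :=
  !![0,0,0,1; 0,0,0,1; 0,0,0,2; 1,1,2,0]

set_option maxHeartbeats 2000000 in
theorem stmt14 :
    (M0 * M0.transpose + M1 * M1.transpose + M2 * M2.transpose
        + M3 * M3.transpose).charpoly =
      (X - C 12) ^ 2 * (X - C 3) * (X - C 2) := by
  have hM : M0 * M0.transpose + M1 * M1.transpose + M2 * M2.transpose
      + M3 * M3.transpose = !![4,2,3,0; 2,4,3,0; 3,3,9,0; 0,0,0,12] := by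
    ext i j
    fin_cases i <;> fin_cases j <;>
      norm_num [M0, M1, M2, M3, Matrix.mul_apply, Fin.sum_univ_four, Matrix.one_apply,
        Matrix.vecHead, Matrix.vecTail, Fin.ext_iff, Matrix.vecMul, dotProduct,
          Matrix.transpose_apply, Matrix.cons_val_two, Matrix.cons_val_three]
  rw [hM, Matrix.charpoly]
  have hcm : Matrix.charmatrix (!![4,2,3,0; 2,4,3,0; 3,3,9,0; 0,0,0,12] : Matrix (Fin 4) (Fin 4) ℝ)
      = !![X - C 4, -C 2, -C 3, 0; -C 2, X - C 4, -C 3, 0; -C 3, -C 3, X - C 9, 0;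
          0, 0, 0, X - C 12] := by
    ext i j
    fin_cases i <;> fin_cases j <;>
      simp [Matrix.charmatrix_apply_eq, Matrix.charmatrix_apply_ne]
  rw [hcm]
  simp [Matrix.det_succ_row_zero, Fin.sum_univ_succ, Fin.succAbove, map_ofNat]
  ring
end

section
/- The fusion ring K_12 (basis {1, X, Y, Z} with X·X = 1, X·Y = Y, X·Z = Z, Y·Y = 1 + X + Y, Y·Z = 2Z, Z·Z = 1 + X + 2Y) has a unique ring homomorphism d : K_12 → R with d of each basis element positive, and it satisfies d(1) = d(X) = 1, d(Y) = 2, d(Z) = sqrt 6; consequently d(1)^2 + d(X)^2 + d(Y)^2 + d(Z)^2 = 12. -/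
lemma aux16 (dX dY dZ : ℝ) (hX : 0 < dX) (hY : 0 < dY) (hZ : 0 < dZ)
    (h1 : dX ^ 2 = 1) (h4 : dY ^ 2 = 1 + dX + dY)
    (h6 : dZ ^ 2 = 1 + dX + 2 * dY) :
    dX = 1 ∧ dY = 2 ∧ dZ = Real.sqrt 6 := by
  have hX1 : dX = 1 := by
    have : (dX - 1) * (dX + 1) = 0 := by nlinarith
    rcases mul_eq_zero.mp this with h | h
    · linarith
    · linarith
  subst hX1
  have hY2 : dY = 2 := by
    have : (dY - 2) * (dY + 1) = 0 := by nlinarith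
    rcases mul_eq_zero.mp this with h | h
    · linarith
    · linarith
  subst hY2
  have hZ6 : dZ ^ 2 = 6 := by linarith
  refine ⟨rfl, rfl, ?_⟩
  rw [show (6:ℝ) = dZ ^ 2 from hZ6.symm]
  rw [Real.sqrt_sq hZ.le]

theorem stmt16 :
    (∃! p : ℝ × ℝ × ℝ,
      0 < p.1 ∧ 0 < p.2.1 ∧ 0 < p.2.2 ∧
      p.1 ^ 2 = 1 ∧ p.1 * p.2.1 = p.2.1 ∧ p.1 * p.2.2 = p.2.2 ∧
      p.2.1 ^ 2 = 1 + p.1 + p.2.1 ∧ p.2.1 * p.2.2 = 2 * p.2.2 ∧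
      p.2.2 ^ 2 = 1 + p.1 + 2 * p.2.1) ∧
    (∀ dX dY dZ : ℝ, 0 < dX → 0 < dY → 0 < dZ →
      dX ^ 2 = 1 → dX * dY = dY → dX * dZ = dZ →
      dY ^ 2 = 1 + dX + dY → dY * dZ = 2 * dZ → dZ ^ 2 = 1 + dX + 2 * dY →
      dX = 1 ∧ dY = 2 ∧ dZ = Real.sqrt 6 ∧
        1 ^ 2 + dX ^ 2 + dY ^ 2 + dZ ^ 2 = 12) := by
  have h6 : Real.sqrt 6 ^ 2 = 6 := Real.sq_sqrt (by norm_num)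
  have h6pos : (0:ℝ) < Real.sqrt 6 := Real.sqrt_pos.mpr (by norm_num)
  constructor
  · refine ⟨(1, 2, Real.sqrt 6), ⟨one_pos, two_pos, h6pos, ?_, ?_, ?_, ?_, ?_, ?_⟩, ?_⟩
    · norm_num
    · norm_num
    · norm_num
    · norm_num
    · ring
    · rw [h6]; norm_num
    · rintro ⟨a, b, c⟩ ⟨ha, hb, hc, e1, e2, e3, e4, e5, e6⟩
      obtain ⟨hA, hB, hC⟩ := aux16 a b c ha hb hc e1 e4 e6
      simp_all
  · intro dX dY dZ hX hY hZ e1 e2 e3 e4 e5 e6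
    obtain ⟨hA, hB, hC⟩ := aux16 dX dY dZ hX hY hZ e1 e4 e6
    refine ⟨hA, hB, hC, ?_⟩
    subst hA hB hC
    rw [h6]; norm_num
end
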